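/- Left deriving is a pseudofunctor L from the 2-category whose objects are model categories, whose 1-cells are functors preserving cofibrant objects and weak equivalences between cofibrant objects, and whose 2-cells are natural transformations, to the 2-category Cat: on a natural transformation α : f ⇒ g it gives the induced transformation of L f ⇒ L g represented by αQ, with compositor isomorphisms L h ∘ L f ≅ L(hf) represented by h(q_{fQ-}) and unitor L Id ≅ Id represented by q, satisfying the pseudofunctor coherence axioms. -/

import Mathlib

open CategoryTheory

universe v u

/-- The homotopical data of a model category relevant to derived functors:
weak equivalences (containing identities and satisfying two-out-of-three),
cofibrant and fibrant objects, and functorial cofibrant and fibrant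
replacements `q : Q ⟶ 𝟭` and `r : 𝟭 ⟶ R`. -/
structure ModelData (C : Type u) [Category.{v} C] where
  W : MorphismProperty C
  containsIdentities : W.ContainsIdentities
  twoOutOfThree : W.HasTwoOutOfThreeProperty
  Cofibrant : C → Prop
  Fibrant : C → Prop
  Q : C ⥤ C
  q : Q ⟶ 𝟭 C
  R : C ⥤ C
  r : 𝟭 C ⟶ R
  cofibrant_Q : ∀ X, Cofibrant (Q.obj X)
  fibrant_R : ∀ X, Fibrant (R.obj X)
  W_q : ∀ X, W (q.app X)
  W_r : ∀ X, W (r.app X)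

variable {C : Type u} [Category.{v} C] {D : Type u} [Category.{v} D]

/-- `F` preserves cofibrant objects and weak equivalences between cofibrant
objects. -/
def PreservesCofibrant (M : ModelData C) (N : ModelData D) (F : C ⥤ D) : Prop :=
  (∀ X, M.Cofibrant X → N.Cofibrant (F.obj X)) ∧
    (∀ ⦃X Y : C⦄ (f : X ⟶ Y), M.Cofibrant X → M.Cofibrant Y → M.W f →
      N.W (F.map f))

/-- `F` preserves fibrant objects and weak equivalences between fibrant
objects. -/
def PreservesFibrant (M : ModelData C) (N : ModelData D) (F : C ⥤ D) : Prop :=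
  (∀ X, M.Fibrant X → N.Fibrant (F.obj X)) ∧
    (∀ ⦃X Y : C⦄ (f : X ⟶ Y), M.Fibrant X → M.Fibrant Y → M.W f →
      N.W (F.map f))

/-- A bundled model category (with derived-functor data). -/
structure MCat where
  C : Type u
  [cat : Category.{v} C]
  data : ModelData C

attribute [instance] MCat.cat

/-- 1-cells: functors preserving cofibrant objects and weak equivalences
between cofibrant objects. -/
def GoodFun (M N : MCat) :=
  {F : M.C ⥤ N.C // PreservesCofibrant M.data N.data F}

/-- The identity 1-cell. -/
def GoodFun.id (M : MCat) : GoodFun M M :=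
  ⟨𝟭 M.C, fun _ h => h, fun _ _ _ _ _ hw => hw⟩

/-- Composition of 1-cells. -/
def GoodFun.comp {M N P : MCat} (F : GoodFun M N) (G : GoodFun N P) :
    GoodFun M P :=
  ⟨F.1 ⋙ G.1,
    fun X h => G.2.1 _ (F.2.1 X h),
    fun _ _ f hX hY hw => G.2.2 _ (F.2.1 _ hX) (F.2.1 _ hY) (F.2.2 f hX hY hw)⟩

/-- The data and coherence axioms of a pseudofunctor from the (strict)
2-category of model categories — with 1-cells the functors preserving cofibrant
objects and weak equivalences between them, and 2-cells all natural
transformations — to `Cat`, fixed on objects to be `M ↦ Ho(M)`. -/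
structure DerivedData where
  map : ∀ {M N : MCat}, GoodFun M N →
    (M.data.W.Localization ⥤ N.data.W.Localization)
  map₂ : ∀ {M N : MCat} {F G : GoodFun M N}, (F.1 ⟶ G.1) → (map F ⟶ map G)
  mapId : ∀ M : MCat, map (GoodFun.id M) ≅ 𝟭 _
  mapComp : ∀ {M N P : MCat} (F : GoodFun M N) (G : GoodFun N P),
    map (F.comp G) ≅ map F ⋙ map G
  map₂_id : ∀ {M N : MCat} (F : GoodFun M N), map₂ (𝟙 F.1) = 𝟙 (map F)
  map₂_comp : ∀ {M N : MCat} {F G H : GoodFun M N}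
    (α : F.1 ⟶ G.1) (β : G.1 ⟶ H.1), map₂ (α ≫ β) = map₂ α ≫ map₂ β
  mapComp_natural : ∀ {M N P : MCat} {F F' : GoodFun M N} {G G' : GoodFun N P}
    (α : F.1 ⟶ F'.1) (β : G.1 ⟶ G'.1),
    (mapComp F G).inv ≫
        map₂ (F := F.comp G) (G := F'.comp G')
          (Functor.whiskerRight α G.1 ≫ Functor.whiskerLeft F'.1 β) =
      (Functor.whiskerRight (map₂ α) (map G) ≫ Functor.whiskerLeft (map F') (map₂ β)) ≫
        (mapComp F' G').inv
  assoc_coherence : ∀ {M N P Q : MCat}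
    (F : GoodFun M N) (G : GoodFun N P) (H : GoodFun P Q),
    (mapComp (F.comp G) H).hom ≫ Functor.whiskerRight (mapComp F G).hom (map H) =
      (mapComp F (G.comp H)).hom ≫ Functor.whiskerLeft (map F) (mapComp G H).hom
  id_comp_coherence : ∀ {M N : MCat} (F : GoodFun M N),
    (mapComp (GoodFun.id M) F).hom ≫ Functor.whiskerRight (mapId M).hom (map F) =
      𝟙 (map F)
  comp_id_coherence : ∀ {M N : MCat} (F : GoodFun M N),
    (mapComp F (GoodFun.id N)).hom ≫ Functor.whiskerLeft (map F) (mapId N).hom =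
      𝟙 (map F)

/-! Natural transformations between functors out of `Ho(M)` are determined by their whiskering
with the localization functor `γ = M.W.Q`, since whiskering with a localization is fully faithful.
So the derived functor `L F`, the derived 2-cells, the unitor and the compositor are defined by
their prescribed representatives, and each pseudofunctor axiom is checked after whiskering with
`γ`, objectwise, where it reduces to naturality of `q` and of the given 2-cells. The one
non-formal input is the left unit law, which needs `F (q (Q X)) = F (Q (q X))` in `Ho(N)`. -/

noncomputable section

open Localization
open CategoryTheory.Functor (whiskerLeft whiskerRight isoWhiskerLeft isoWhiskerRight)

namespace ModelData

variable {C : Type u} [Category.{v} C] {E : Type*} [Category E]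

lemma W_Q_map (M : ModelData C) {X Y : C} {f : X ⟶ Y} (hf : M.W f) : M.W (M.Q.map f) := by
  have := M.twoOutOfThree
  refine M.W.of_postcomp _ _ (M.W_q Y) ?_
  rw [M.q.naturality f]
  exact M.W.comp_mem _ _ (M.W_q X) hf

/-- `a = q (Q X)` and `b = Q (q X)` need not agree in `C`. But for `c = q (Q (Q X))`, naturality
of `q` gives `Q a ≫ a = c ≫ a`, `Q a ≫ b = Q b ≫ b` and `Q b ≫ a = c ≫ b`, and `G` inverts
`a`, `b` and `c`. -/
lemma map_q_app_Q_obj_eq (M : ModelData C) (G : C ⥤ E)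
    (hG : ∀ ⦃X Y : C⦄ (f : X ⟶ Y), M.Cofibrant X → M.Cofibrant Y → M.W f → IsIso (G.map f))
    (X : C) : G.map (M.q.app (M.Q.obj X)) = G.map (M.Q.map (M.q.app X)) := by
  set a := M.q.app (M.Q.obj X)
  set b := M.Q.map (M.q.app X)
  set c := M.q.app (M.Q.obj (M.Q.obj X))
  have hQ : ∀ ⦃Y Z : C⦄ (f : M.Q.obj Y ⟶ M.Q.obj Z), M.W f → IsIso (G.map f) :=
    fun _ _ f hf => hG f (M.cofibrant_Q _) (M.cofibrant_Q _) hf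
  have := hQ a (M.W_q _)
  have := hQ b (M.W_Q_map (M.W_q X))
  have := hQ c (M.W_q _)
  have hba : b ≫ M.q.app X = a ≫ M.q.app X := M.q.naturality (M.q.app X)
  have hQaa : M.Q.map a ≫ a = c ≫ a := M.q.naturality a
  have hQab : M.Q.map a ≫ b = M.Q.map b ≫ b := by
    simpa only [Functor.map_comp] using (congrArg M.Q.map hba).symm
  have hQba : M.Q.map b ≫ a = c ≫ b := M.q.naturality b
  have hGQa : G.map (M.Q.map a) = G.map c := by
    simpa only [Functor.map_comp, cancel_mono] using congrArg G.map hQaa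
  have hGQab : G.map (M.Q.map a) = G.map (M.Q.map b) := by
    simpa only [Functor.map_comp, cancel_mono] using congrArg G.map hQab
  have hGQba := congrArg G.map hQba
  rwa [Functor.map_comp, Functor.map_comp, ← hGQab, hGQa, cancel_epi] at hGQba

instance isIso_whiskerRight_q (M : ModelData C) : IsIso (whiskerRight M.q M.W.Q) :=
  have (X : C) : IsIso ((whiskerRight M.q M.W.Q).app X) :=
    Localization.inverts M.W.Q M.W _ (M.W_q X)
  NatIso.isIso_of_isIso_app _

end ModelData

variable {C D E A : Type u} [Category.{v} C] [Category.{v} D] [Category.{v} E] [Category.{v} A]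
  {M : ModelData C} {N : ModelData D} {P : ModelData E} {O : ModelData A}

namespace PreservesCofibrant

lemma id (M : ModelData C) : PreservesCofibrant M M (𝟭 C) :=
  ⟨fun _ h => h, fun _ _ _ _ _ hf => hf⟩

lemma comp {F : C ⥤ D} {G : D ⥤ E} (hF : PreservesCofibrant M N F)
    (hG : PreservesCofibrant N P G) : PreservesCofibrant M P (F ⋙ G) :=
  ⟨fun X hX => hG.1 _ (hF.1 X hX),
    fun _ _ f hX hY hf => hG.2 _ (hF.1 _ hX) (hF.1 _ hY) (hF.2 f hX hY hf)⟩

lemma isIso_map {F : C ⥤ D} (hF : PreservesCofibrant M N F) {X Y : C} (f : X ⟶ Y)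
    (hX : M.Cofibrant X) (hY : M.Cofibrant Y) (hf : M.W f) : IsIso (N.W.Q.map (F.map f)) :=
  Localization.inverts N.W.Q N.W _ (hF.2 f hX hY hf)

lemma isIso_whiskerRight_whiskerLeft_q {B : Type*} [Category B] {G : D ⥤ E}
    (hG : PreservesCofibrant N P G) (K : B ⥤ D) (hK : ∀ b, N.Cofibrant (K.obj b)) :
    IsIso (whiskerRight (whiskerLeft K (whiskerRight N.q G)) P.W.Q) :=
  have (b : B) : IsIso ((whiskerRight (whiskerLeft K (whiskerRight N.q G)) P.W.Q).app b) :=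
    hG.isIso_map (N.q.app (K.obj b)) (N.cofibrant_Q _) (hK b) (N.W_q _)
  NatIso.isIso_of_isIso_app _

end PreservesCofibrant

namespace ModelData

variable {F F' F'' : C ⥤ D} {G G' : D ⥤ E} {H : E ⥤ A}
  (hF : PreservesCofibrant M N F) (hF' : PreservesCofibrant M N F')
  (hF'' : PreservesCofibrant M N F'') (hG : PreservesCofibrant N P G)
  (hG' : PreservesCofibrant N P G') (hH : PreservesCofibrant P O H)

def leftDerived : M.W.Localization ⥤ N.W.Localization :=
  lift ((M.Q ⋙ F) ⋙ N.W.Q)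
    (fun _ _ _ hf => hF.isIso_map _ (M.cofibrant_Q _) (M.cofibrant_Q _) (M.W_Q_map hf)) M.W.Q

def leftDerivedFac : M.W.Q ⋙ leftDerived hF ≅ (M.Q ⋙ F) ⋙ N.W.Q :=
  fac _ _ _

def leftDerivedMap₂ (α : F ⟶ F') : leftDerived hF ⟶ leftDerived hF' :=
  (fullyFaithfulWhiskeringLeft M.W.Q M.W _).preimage <|
    (leftDerivedFac hF).hom ≫ whiskerRight (whiskerLeft M.Q α) N.W.Q ≫
      (leftDerivedFac hF').inv

lemma whiskerLeft_leftDerivedMap₂ (α : F ⟶ F') :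
    whiskerLeft M.W.Q (leftDerivedMap₂ hF hF' α) =
      (leftDerivedFac hF).hom ≫ whiskerRight (whiskerLeft M.Q α) N.W.Q ≫
        (leftDerivedFac hF').inv :=
  (fullyFaithfulWhiskeringLeft M.W.Q M.W _).map_preimage _

def leftDerivedId (M : ModelData C) : leftDerived (.id M) ≅ 𝟭 M.W.Localization :=
  (fullyFaithfulWhiskeringLeft M.W.Q M.W _).preimageIso <|
    leftDerivedFac (.id M) ≪≫ asIso (whiskerRight M.q M.W.Q)

lemma whiskerLeft_leftDerivedId_hom (M : ModelData C) :
    whiskerLeft M.W.Q (leftDerivedId M).hom =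
      (leftDerivedFac (.id M)).hom ≫ whiskerRight M.q M.W.Q :=
  (fullyFaithfulWhiskeringLeft M.W.Q M.W _).map_preimage _

def leftDerivedComp : leftDerived (hF.comp hG) ≅ leftDerived hF ⋙ leftDerived hG :=
  have := hG.isIso_whiskerRight_whiskerLeft_q (M.Q ⋙ F) fun X => hF.1 _ (M.cofibrant_Q X)
  ((fullyFaithfulWhiskeringLeft M.W.Q M.W _).preimageIso
    (isoWhiskerRight (leftDerivedFac hF) (leftDerived hG) ≪≫
      isoWhiskerLeft (M.Q ⋙ F) (leftDerivedFac hG) ≪≫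
      asIso (whiskerRight (whiskerLeft (M.Q ⋙ F) (whiskerRight N.q G)) P.W.Q) ≪≫
      (leftDerivedFac (hF.comp hG)).symm :
      M.W.Q ⋙ leftDerived hF ⋙ leftDerived hG ≅ M.W.Q ⋙ leftDerived (hF.comp hG))).symm

lemma whiskerLeft_leftDerivedComp_inv :
    whiskerLeft M.W.Q (leftDerivedComp hF hG).inv =
      whiskerRight (leftDerivedFac hF).hom (leftDerived hG) ≫
        whiskerLeft (M.Q ⋙ F) (leftDerivedFac hG).hom ≫
        whiskerRight (whiskerLeft (M.Q ⋙ F) (whiskerRight N.q G)) P.W.Q ≫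
        (leftDerivedFac (hF.comp hG)).inv :=
  (fullyFaithfulWhiskeringLeft M.W.Q M.W P.W.Localization).map_preimage _

lemma leftDerivedMap₂_id : leftDerivedMap₂ hF hF (𝟙 F) = 𝟙 _ :=
  (fullyFaithfulWhiskeringLeft M.W.Q M.W _).map_injective <| by
    simp [whiskerLeft_leftDerivedMap₂]

lemma leftDerivedMap₂_comp (α : F ⟶ F') (β : F' ⟶ F'') :
    leftDerivedMap₂ hF hF'' (α ≫ β) = leftDerivedMap₂ hF hF' α ≫ leftDerivedMap₂ hF' hF'' β :=
  (fullyFaithfulWhiskeringLeft M.W.Q M.W _).map_injective <| by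
    simp [whiskerLeft_leftDerivedMap₂]

lemma leftDerivedFac_hom_naturality {X Y : C} (f : X ⟶ Y) :
    (leftDerived hF).map (M.W.Q.map f) ≫ (leftDerivedFac hF).hom.app Y =
      (leftDerivedFac hF).hom.app X ≫ N.W.Q.map (F.map (M.Q.map f)) :=
  (leftDerivedFac hF).hom.naturality f

lemma leftDerivedMap₂_app (α : F ⟶ F') (X : C) :
    (leftDerivedMap₂ hF hF' α).app (M.W.Q.obj X) =
      (leftDerivedFac hF).hom.app X ≫ N.W.Q.map (α.app (M.Q.obj X)) ≫
        (leftDerivedFac hF').inv.app X :=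
  NatTrans.congr_app (whiskerLeft_leftDerivedMap₂ hF hF' α) X

lemma leftDerivedId_hom_app (X : C) :
    (leftDerivedId M).hom.app (M.W.Q.obj X) =
      (leftDerivedFac (.id M)).hom.app X ≫ M.W.Q.map (M.q.app X) :=
  NatTrans.congr_app (whiskerLeft_leftDerivedId_hom M) X

lemma leftDerivedComp_inv_app (X : C) :
    (leftDerivedComp hF hG).inv.app (M.W.Q.obj X) =
      (leftDerived hG).map ((leftDerivedFac hF).hom.app X) ≫
        (leftDerivedFac hG).hom.app (F.obj (M.Q.obj X)) ≫
        P.W.Q.map (G.map (N.q.app (F.obj (M.Q.obj X)))) ≫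
        (leftDerivedFac (hF.comp hG)).inv.app X :=
  NatTrans.congr_app (whiskerLeft_leftDerivedComp_inv hF hG) X

lemma leftDerivedComp_inv_naturality (α : F ⟶ F') (β : G ⟶ G') :
    (leftDerivedComp hF hG).inv ≫
        leftDerivedMap₂ (hF.comp hG) (hF'.comp hG') (whiskerRight α G ≫ whiskerLeft F' β) =
      (whiskerRight (leftDerivedMap₂ hF hF' α) (leftDerived hG) ≫
          whiskerLeft (leftDerived hF') (leftDerivedMap₂ hG hG' β)) ≫
        (leftDerivedComp hF' hG').inv := by
  refine natTrans_ext M.W.Q M.W fun X => ?_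
  simp only [Functor.comp_obj, NatTrans.comp_app, leftDerivedComp_inv_app, Functor.id_obj,
    leftDerivedMap₂_app, Functor.whiskerRight_app, Functor.whiskerLeft_app, NatTrans.naturality,
    Functor.map_comp, Category.assoc, Iso.inv_hom_id_app_assoc, NatTrans.naturality_assoc,
    cancelIso]
  rw [reassoc_of% leftDerivedFac_hom_naturality hG]
  have h : G.map (N.q.app (F.obj (M.Q.obj X))) ≫ β.app _ ≫ G'.map (α.app (M.Q.obj X)) =
      G.map (N.Q.map (α.app _)) ≫ β.app _ ≫ G'.map (N.q.app (F'.obj (M.Q.obj X))) := by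
    rw [β.naturality_assoc, β.naturality_assoc, ← G'.map_comp, ← G'.map_comp, N.q.naturality]
    rfl
  have h' := congrArg P.W.Q.map h
  simp only [Functor.map_comp] at h'
  rw [reassoc_of% h']

lemma leftDerivedComp_inv_assoc_coherence :
    whiskerRight (leftDerivedComp hF hG).inv (leftDerived hH) ≫
        (leftDerivedComp (hF.comp hG) hH).inv =
      whiskerLeft (leftDerived hF) (leftDerivedComp hG hH).inv ≫
        (leftDerivedComp hF (hG.comp hH)).inv := by
  refine natTrans_ext M.W.Q M.W fun X => ?_
  have hGH := (leftDerivedComp hG hH).inv.naturality ((leftDerivedFac hF).hom.app X)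
  simp only [Functor.comp_obj, Functor.comp_map, leftDerivedComp_inv_app, Functor.id_obj] at hGH
  simp only [Functor.comp_obj, NatTrans.comp_app, Functor.whiskerRight_app, leftDerivedComp_inv_app,
    Functor.id_obj, Functor.map_comp, Category.assoc, cancelIso, Functor.whiskerLeft_app,
    Functor.comp_map]
  rw [← reassoc_of% hGH, Iso.inv_hom_id_app_assoc, reassoc_of% leftDerivedFac_hom_naturality hH]
  have hq := congrArg (fun f => O.W.Q.map (H.map f))
    (P.q.naturality (G.map (N.q.app (F.obj (M.Q.obj X)))))
  simp only [Functor.map_comp] at hq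
  rw [reassoc_of% hq]

lemma whiskerRight_leftDerivedId_hom :
    whiskerRight (leftDerivedId M).hom (leftDerived hF) = (leftDerivedComp (.id M) hF).inv := by
  refine natTrans_ext M.W.Q M.W fun X => ?_
  have hq := M.map_q_app_Q_obj_eq (F ⋙ N.W.Q) (fun _ _ f hX hY hf => hF.isIso_map f hX hY hf) X
  simp only [Functor.comp_map] at hq
  simp only [Functor.whiskerRight_app, leftDerivedId_hom_app, leftDerivedComp_inv_app,
    Functor.map_comp, Functor.id_obj, hq, ← reassoc_of% leftDerivedFac_hom_naturality hF]
  erw [Iso.hom_inv_id_app, Category.comp_id]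

lemma whiskerLeft_leftDerived_leftDerivedId_hom :
    whiskerLeft (leftDerived hF) (leftDerivedId N).hom = (leftDerivedComp hF (.id N)).inv := by
  refine natTrans_ext M.W.Q M.W fun X => ?_
  have hId := (leftDerivedId N).hom.naturality ((leftDerivedFac hF).hom.app X)
  simp only [Functor.comp_obj, Functor.id_map, leftDerivedId_hom_app] at hId
  rw [Functor.whiskerLeft_app, leftDerivedComp_inv_app,
    ← cancel_mono ((leftDerivedFac hF).hom.app X), ← hId]
  simp only [Category.assoc, Functor.id_map]
  erw [Iso.inv_hom_id_app, Category.comp_id]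

lemma leftDerived_assoc_coherence :
    (leftDerivedComp (hF.comp hG) hH).hom ≫
        whiskerRight (leftDerivedComp hF hG).hom (leftDerived hH) =
      (leftDerivedComp hF (hG.comp hH)).hom ≫
        whiskerLeft (leftDerived hF) (leftDerivedComp hG hH).hom :=
  (Iso.inv_eq_inv (leftDerivedComp (hF.comp hG) hH ≪≫ isoWhiskerRight (leftDerivedComp hF hG) _)
    (leftDerivedComp hF (hG.comp hH) ≪≫ isoWhiskerLeft _ (leftDerivedComp hG hH))).mp
    (leftDerivedComp_inv_assoc_coherence hF hG hH)

lemma leftDerived_id_comp_coherence :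
    (leftDerivedComp (.id M) hF).hom ≫ whiskerRight (leftDerivedId M).hom (leftDerived hF) =
      𝟙 (leftDerived hF) := by
  rw [whiskerRight_leftDerivedId_hom]
  exact (leftDerivedComp (.id M) hF).hom_inv_id

lemma leftDerived_comp_id_coherence :
    (leftDerivedComp hF (.id N)).hom ≫ whiskerLeft (leftDerived hF) (leftDerivedId N).hom =
      𝟙 (leftDerived hF) := by
  rw [whiskerLeft_leftDerived_leftDerivedId_hom]
  exact (leftDerivedComp hF (.id N)).hom_inv_id

end ModelData

end

/-- Left deriving is a pseudofunctor: there is a pseudofunctor from the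
2-category of model categories, functors preserving cofibrant objects and weak
equivalences between cofibrant objects, and natural transformations, to `Cat`,
sending `M` to `Ho(M)`; on 1-cells it is represented by `F ∘ Q`, on a 2-cell
`α` it is represented by `α Q`, its compositor is represented by `h(q_{fQ-})`,
and its unitor is represented by `q`. -/
theorem left_deriving_is_pseudofunctor :
    ∃ (L : DerivedData)
      (e : ∀ {M N : MCat} (F : GoodFun M N),
        M.data.W.Q ⋙ L.map F ≅ (M.data.Q ⋙ F.1) ⋙ N.data.W.Q),
      (∀ {M N : MCat} (F G : GoodFun M N) (α : F.1 ⟶ G.1),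
        Functor.whiskerLeft M.data.W.Q (L.map₂ α) =
          (e F).hom ≫ Functor.whiskerRight (Functor.whiskerLeft M.data.Q α) N.data.W.Q ≫
            (e G).inv) ∧
      (∀ M : MCat,
        Functor.whiskerLeft M.data.W.Q (L.mapId M).hom =
          (e (GoodFun.id M)).hom ≫ Functor.whiskerRight M.data.q M.data.W.Q) ∧
      (∀ {M N P : MCat} (F : GoodFun M N) (G : GoodFun N P),
        Functor.whiskerLeft M.data.W.Q (L.mapComp F G).inv =
          Functor.whiskerRight (e F).hom (L.map G) ≫
            Functor.whiskerLeft (M.data.Q ⋙ F.1) (e G).hom ≫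
            Functor.whiskerRight
              (Functor.whiskerLeft (M.data.Q ⋙ F.1) (Functor.whiskerRight N.data.q G.1))
              P.data.W.Q ≫
            (e (F.comp G)).inv) :=
  ⟨{ map := fun F => ModelData.leftDerived F.2
     map₂ := fun α => ModelData.leftDerivedMap₂ _ _ α
     mapId := fun M => ModelData.leftDerivedId M.data
     mapComp := fun F G => ModelData.leftDerivedComp F.2 G.2
     map₂_id := fun F => ModelData.leftDerivedMap₂_id F.2
     map₂_comp := fun α β => ModelData.leftDerivedMap₂_comp _ _ _ α β
     mapComp_natural := fun α β => ModelData.leftDerivedComp_inv_naturality _ _ _ _ α β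
     assoc_coherence := fun F G H => ModelData.leftDerived_assoc_coherence F.2 G.2 H.2
     id_comp_coherence := fun F => ModelData.leftDerived_id_comp_coherence F.2
     comp_id_coherence := fun F => ModelData.leftDerived_comp_id_coherence F.2 },
    fun F => ModelData.leftDerivedFac F.2,
    fun F G α => ModelData.whiskerLeft_leftDerivedMap₂ F.2 G.2 α,
    fun M => ModelData.whiskerLeft_leftDerivedId_hom M.data,
    fun F G => ModelData.whiskerLeft_leftDerivedComp_inv F.2 G.2⟩
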